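/- arXiv:2512.03510 — 7 statements merged into one kernel-verified Lean document; each statement's English description precedes it below -/
import Mathlib

section
/- GNC truncated-least-squares weight update, outlier case: let μ > 0, c > 0 and r ≥ ((μ+1)/μ)·c². Then the function f(w) = w·r + μ(1−w)c²/(μ+w) on the interval [0,1] attains its minimum at w = 0; that is, f(0) ≤ f(w) for all w ∈ [0,1]. -/
/-! Subtracting `f 0 = c²` leaves `f w - f 0 = w · (r - (μ + 1) c² / (μ + w))`, and the bracket is
nonnegative for `w ≥ 0` because `(μ + 1) c² / (μ + w) ≤ (μ + 1) c² / μ ≤ r`. -/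

noncomputable def gncTlsCost (μ c r w : ℝ) : ℝ :=
  w * r + μ * (1 - w) * c ^ 2 / (μ + w)

section

variable {μ c r w : ℝ}

theorem gncTlsCost_sub_gncTlsCost_zero (hμ : μ ≠ 0) (hμw : μ + w ≠ 0) :
    gncTlsCost μ c r w - gncTlsCost μ c r 0 = w * (r - (μ + 1) * c ^ 2 / (μ + w)) := by
  simp only [gncTlsCost, zero_mul, zero_add, sub_zero, mul_one, add_zero]
  field_simp
  ring

theorem tls_outlier_threshold_le (hμ : 0 < μ) (hw : 0 ≤ w) (hr : (μ + 1) / μ * c ^ 2 ≤ r) :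
    (μ + 1) * c ^ 2 / (μ + w) ≤ r :=
  calc (μ + 1) * c ^ 2 / (μ + w) ≤ (μ + 1) * c ^ 2 / μ := by gcongr; linarith
    _ = (μ + 1) / μ * c ^ 2 := by ring
    _ ≤ r := hr

theorem gncTlsCost_zero_le (hμ : 0 < μ) (hw : 0 ≤ w) (hr : (μ + 1) / μ * c ^ 2 ≤ r) :
    gncTlsCost μ c r 0 ≤ gncTlsCost μ c r w := by
  have hdiff := gncTlsCost_sub_gncTlsCost_zero (c := c) (r := r) hμ.ne' (by linarith : μ + w ≠ 0)
  have hbracket := sub_nonneg.mpr (tls_outlier_threshold_le hμ hw hr)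
  linarith [mul_nonneg hw hbracket]

end

theorem gnc_tls_outlier_case_general (μ c r : ℝ) (hμ : 0 < μ)
    (hr : ((μ + 1) / μ) * c ^ 2 ≤ r) :
    ∀ w ∈ Set.Icc (0 : ℝ) 1,
      (0 : ℝ) * r + μ * (1 - 0) * c ^ 2 / (μ + 0) ≤
        w * r + μ * (1 - w) * c ^ 2 / (μ + w) :=
  fun _ hw => gncTlsCost_zero_le hμ hw.1 hr

/-- GNC truncated-least-squares weight update, outlier case: if
`r ≥ ((μ+1)/μ)·c²`, then `f(w) = w·r + μ(1−w)c²/(μ+w)` attains its minimum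
on `[0,1]` at `w = 0`. -/
theorem gnc_tls_outlier_case (μ c r : ℝ) (hμ : 0 < μ) (hc : 0 < c)
    (hr : ((μ + 1) / μ) * c ^ 2 ≤ r) :
    ∀ w ∈ Set.Icc (0 : ℝ) 1,
      (0 : ℝ) * r + μ * (1 - 0) * c ^ 2 / (μ + 0) ≤
        w * r + μ * (1 - w) * c ^ 2 / (μ + w) :=
  gnc_tls_outlier_case_general μ c r hμ hr
end

section
/- GNC truncated-least-squares weight update, inlier case: let μ > 0, c > 0 and 0 ≤ r ≤ (μ/(μ+1))·c². Then the function f(w) = w·r + μ(1−w)c²/(μ+w) on the interval [0,1] attains its minimum at w = 1; that is, f(1) ≤ f(w) for all w ∈ [0,1]. -/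
/-- GNC truncated-least-squares weight update, inlier case: if
`0 ≤ r ≤ (μ/(μ+1))·c²`, then `f(w) = w·r + μ(1−w)c²/(μ+w)` attains its minimum
on `[0,1]` at `w = 1`. -/
theorem gnc_tls_inlier_case (μ c r : ℝ) (hμ : 0 < μ) (hc : 0 < c)
    (hr0 : 0 ≤ r) (hr : r ≤ (μ / (μ + 1)) * c ^ 2) :
    ∀ w ∈ Set.Icc (0 : ℝ) 1,
      (1 : ℝ) * r + μ * (1 - 1) * c ^ 2 / (μ + 1) ≤
        w * r + μ * (1 - w) * c ^ 2 / (μ + w) := by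
  intro w hw
  obtain ⟨hw0, hw1⟩ := hw
  have hμw : (0:ℝ) < μ + w := by linarith
  have hμ1 : (0:ℝ) < μ + 1 := by linarith
  have key : r * (μ + 1) ≤ μ * c ^ 2 := by
    have := hr
    rw [div_mul_eq_mul_div, le_div_iff₀ hμ1] at this
    linarith
  have e1 : (1:ℝ) * r + μ * (1 - 1) * c ^ 2 / (μ + 1) = r := by ring
  rw [e1, ← sub_nonneg]
  have e2 : w * r + μ * (1 - w) * c ^ 2 / (μ + w) - r
      = ((1 - w) * (μ * c ^ 2 - r * (μ + w))) / (μ + w) := by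
    field_simp
    ring
  rw [e2]
  apply div_nonneg _ hμw.le
  have : r * (μ + w) ≤ μ * c ^ 2 := by nlinarith
  nlinarith
end

section
/- GNC truncated-least-squares weight update, intermediate case: let μ > 0, c > 0 and (μ/(μ+1))·c² < r < ((μ+1)/μ)·c². Set w* = c·√(μ(μ+1)/r) − μ. Then w* ∈ (0,1), the function f(w) = w·r + μ(1−w)c²/(μ+w) on [0,1] attains its minimum at w*, and the minimum value is f(w*) = 2c·√(μ(μ+1)·r) − μ(r + c²). -/
/-!
Put `t = μ + w`. Then `f(w) = t·r + μ(μ+1)c²/t − μ(r + c²)`, and with `t₀ = c·√(μ(μ+1)/r)`,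
which satisfies `r·t₀² = μ(μ+1)c²`, completing the square gives
`f(w) = 2r·t₀ − μ(r + c²) + r(t − t₀)²/t`. Hence `f` is minimal where `t = t₀`, i.e. at
`w* = t₀ − μ`, and the two strict bounds on `r` are exactly `μ < t₀ < μ + 1`.
-/

open Real

noncomputable def tlsObjective (μ c r w : ℝ) : ℝ := w * r + μ * (1 - w) * c ^ 2 / (μ + w)

section Objective

variable {μ c r t₀ : ℝ}

theorem tlsObjective_eq (hK : r * t₀ ^ 2 = μ * (μ + 1) * c ^ 2) {w : ℝ} (hw : μ + w ≠ 0) :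
    tlsObjective μ c r w =
      2 * r * t₀ - μ * (r + c ^ 2) + r * (μ + w - t₀) ^ 2 / (μ + w) := by
  unfold tlsObjective
  field_simp
  linear_combination -hK

theorem tlsObjective_sub_eq (hK : r * t₀ ^ 2 = μ * (μ + 1) * c ^ 2) (ht₀ : t₀ ≠ 0) :
    tlsObjective μ c r (t₀ - μ) = 2 * r * t₀ - μ * (r + c ^ 2) := by
  rw [tlsObjective_eq hK (by rwa [add_sub_cancel])]
  simp

theorem tlsObjective_sub_le (hK : r * t₀ ^ 2 = μ * (μ + 1) * c ^ 2) (hr : 0 ≤ r) (ht₀ : t₀ ≠ 0)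
    {w : ℝ} (hw : 0 < μ + w) :
    tlsObjective μ c r (t₀ - μ) ≤ tlsObjective μ c r w := by
  rw [tlsObjective_sub_eq hK ht₀, tlsObjective_eq hK hw.ne']
  have : 0 ≤ r * (μ + w - t₀) ^ 2 / (μ + w) := by positivity
  linarith

end Objective

section Stationary

variable {μ c r : ℝ}

theorem mul_sqrt_div_sq (hr : 0 < r) (hμ : 0 ≤ μ * (μ + 1)) :
    r * (c * √(μ * (μ + 1) / r)) ^ 2 = μ * (μ + 1) * c ^ 2 := by
  rw [mul_pow, sq_sqrt (div_nonneg hμ hr.le)]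
  field_simp

theorem mul_sqrt_mul_eq (hr : 0 < r) :
    c * √(μ * (μ + 1) * r) = r * (c * √(μ * (μ + 1) / r)) := by
  have : μ * (μ + 1) * r = μ * (μ + 1) / r * r ^ 2 := by field_simp
  rw [this, sqrt_mul' _ (sq_nonneg r), sqrt_sq hr.le]
  ring

theorem mul_sqrt_div_mem_Ioo (hμ : 0 < μ) (hc : 0 < c)
    (hr₁ : (μ / (μ + 1)) * c ^ 2 < r) (hr₂ : r < ((μ + 1) / μ) * c ^ 2) :
    c * √(μ * (μ + 1) / r) ∈ Set.Ioo μ (μ + 1) := by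
  have hr : 0 < r := lt_of_le_of_lt (by positivity) hr₁
  rw [← sqrt_sq hc.le, ← sqrt_mul' _ (by positivity), ← mul_div_assoc]
  constructor
  · rw [lt_sqrt hμ.le, lt_div_iff₀ hr]
    rw [div_mul_eq_mul_div, lt_div_iff₀ hμ] at hr₂
    nlinarith
  · rw [sqrt_lt' (by positivity), div_lt_iff₀ hr]
    rw [div_mul_eq_mul_div, div_lt_iff₀ (by positivity)] at hr₁
    nlinarith

end Stationary

/-- GNC truncated-least-squares weight update, intermediate case: if
`(μ/(μ+1))·c² < r < ((μ+1)/μ)·c²`, then `w* = c·√(μ(μ+1)/r) − μ` lies in `(0,1)`,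
the function `f(w) = w·r + μ(1−w)c²/(μ+w)` attains its minimum on `[0,1]` at `w*`,
and the minimum value is `2c·√(μ(μ+1)·r) − μ(r + c²)`. -/
theorem gnc_tls_intermediate_case (μ c r : ℝ) (hμ : 0 < μ) (hc : 0 < c)
    (hr₁ : (μ / (μ + 1)) * c ^ 2 < r) (hr₂ : r < ((μ + 1) / μ) * c ^ 2) :
    (c * Real.sqrt (μ * (μ + 1) / r) - μ) ∈ Set.Ioo (0 : ℝ) 1 ∧
    (∀ w ∈ Set.Icc (0 : ℝ) 1,
      (c * Real.sqrt (μ * (μ + 1) / r) - μ) * r +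
          μ * (1 - (c * Real.sqrt (μ * (μ + 1) / r) - μ)) * c ^ 2 /
            (μ + (c * Real.sqrt (μ * (μ + 1) / r) - μ)) ≤
        w * r + μ * (1 - w) * c ^ 2 / (μ + w)) ∧
    (c * Real.sqrt (μ * (μ + 1) / r) - μ) * r +
        μ * (1 - (c * Real.sqrt (μ * (μ + 1) / r) - μ)) * c ^ 2 /
          (μ + (c * Real.sqrt (μ * (μ + 1) / r) - μ)) =
      2 * c * Real.sqrt (μ * (μ + 1) * r) - μ * (r + c ^ 2) := by
  have hr : 0 < r := lt_of_le_of_lt (by positivity) hr₁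
  obtain ⟨hlo, hhi⟩ := mul_sqrt_div_mem_Ioo hμ hc hr₁ hr₂
  have hK := mul_sqrt_div_sq (c := c) hr (by positivity)
  have ht₀ : c * √(μ * (μ + 1) / r) ≠ 0 := (hμ.trans hlo).ne'
  refine ⟨⟨by linarith, by linarith⟩, fun w hw => ?_, ?_⟩
  · exact tlsObjective_sub_le hK hr.le ht₀ (by linarith [hw.1])
  · rw [mul_assoc 2, mul_sqrt_mul_eq hr]
    exact (tlsObjective_sub_eq hK ht₀).trans (by ring)
end

section
/- The graduated surrogate recovers the truncated least-squares loss in the limit: for every r ≥ 0 and c > 0, the infimum ρ_μ(r) = inf_{w ∈ [0,1]} ( w·r + μ(1−w)c²/(μ+w) ) converges to min(r, c²) as μ → ∞. -/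
/-!
For `μ > 0` and `w ∈ [0,1]` we have `μ/(μ+w) ≥ μ/(μ+1)`, so the objective dominates the convex
combination `w·r + (1-w)·c²μ/(μ+1)`, hence `min r (c²μ/(μ+1))`. The endpoints `w = 1` and `w = 0`
give the values `r` and `c²`. The surrogate is thus squeezed between `min r (c²μ/(μ+1))` and
`min r c²`, and `μ/(μ+1) → 1`.
-/

open Filter Set Topology

lemma tendsto_div_add_const_atTop (a : ℝ) :
    Tendsto (fun x : ℝ => x / (x + a)) atTop (𝓝 1) := by
  have h : Tendsto (fun x : ℝ => (1 + a * x⁻¹)⁻¹) atTop (𝓝 1) := by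
    simpa using ((tendsto_inv_atTop_zero.const_mul a).const_add 1).inv₀ (by norm_num)
  refine h.congr' ?_
  filter_upwards [eventually_ne_atTop 0] with x hx
  -- holds even where `x + a = 0`, both sides being `0` there
  rw [show 1 + a * x⁻¹ = (x + a) / x by field_simp, inv_div]

noncomputable def gncObjective (r c μ w : ℝ) : ℝ :=
  w * r + μ * (1 - w) * c ^ 2 / (μ + w)

noncomputable def gncSurrogate (r c μ : ℝ) : ℝ :=
  sInf (gncObjective r c μ '' Icc 0 1)

section

variable {r c μ : ℝ}

lemma gncObjective_zero (hμ : μ ≠ 0) : gncObjective r c μ 0 = c ^ 2 := by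
  simp [gncObjective, hμ]

lemma gncObjective_one : gncObjective r c μ 1 = r := by
  simp [gncObjective]

lemma min_le_gncObjective (hμ : 0 < μ) {w : ℝ} (hw : w ∈ Icc 0 1) :
    min r (c ^ 2 * (μ / (μ + 1))) ≤ gncObjective r c μ w := by
  obtain ⟨hw0, hw1⟩ := hw
  have hw1' : 0 ≤ 1 - w := sub_nonneg.2 hw1
  calc min r (c ^ 2 * (μ / (μ + 1)))
      ≤ w • r + (1 - w) • (c ^ 2 * (μ / (μ + 1))) :=
        Convex.min_le_combo _ _ hw0 hw1' (add_sub_cancel w 1)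
    _ ≤ w * r + (1 - w) * (c ^ 2 * (μ / (μ + w))) := by
        simp only [smul_eq_mul]
        gcongr
    _ = gncObjective r c μ w := by
        unfold gncObjective
        ring

lemma bddBelow_gncObjective_image (hμ : 0 < μ) : BddBelow (gncObjective r c μ '' Icc 0 1) :=
  ⟨_, forall_mem_image.2 fun _ => min_le_gncObjective hμ⟩

lemma min_le_gncSurrogate (hμ : 0 < μ) : min r (c ^ 2 * (μ / (μ + 1))) ≤ gncSurrogate r c μ :=
  le_csInf ((nonempty_Icc.2 zero_le_one).image _)
    (forall_mem_image.2 fun _ => min_le_gncObjective hμ)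

lemma gncSurrogate_le_min (hμ : 0 < μ) : gncSurrogate r c μ ≤ min r (c ^ 2) := by
  have hle {w : ℝ} (hw : w ∈ Icc 0 1) : gncSurrogate r c μ ≤ gncObjective r c μ w :=
    csInf_le (bddBelow_gncObjective_image hμ) (mem_image_of_mem _ hw)
  refine le_min ?_ ?_
  · simpa only [gncObjective_one] using hle (right_mem_Icc.2 zero_le_one)
  · simpa only [gncObjective_zero hμ.ne'] using hle (left_mem_Icc.2 zero_le_one)

end

theorem gnc_surrogate_tendsto_tls_general (r c : ℝ) :
    Filter.Tendsto
      (fun μ : ℝ =>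
        sInf ((fun w : ℝ => w * r + μ * (1 - w) * c ^ 2 / (μ + w)) '' Set.Icc 0 1))
      Filter.atTop (nhds (min r (c ^ 2))) := by
  have hlower : Tendsto (fun μ => min r (c ^ 2 * (μ / (μ + 1)))) atTop (𝓝 (min r (c ^ 2))) := by
    simpa using tendsto_const_nhds.min (tendsto_const_nhds.mul (tendsto_div_add_const_atTop 1))
  show Tendsto (gncSurrogate r c) atTop _
  exact tendsto_of_tendsto_of_tendsto_of_le_of_le' hlower tendsto_const_nhds
    ((eventually_gt_atTop 0).mono fun _ => min_le_gncSurrogate)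
    ((eventually_gt_atTop 0).mono fun _ => gncSurrogate_le_min)

/-- The graduated surrogate recovers the truncated least-squares loss in the limit:
for every `r ≥ 0` and `c > 0`, the infimum over `w ∈ [0,1]` of
`w·r + μ(1−w)c²/(μ+w)` tends to `min r c²` as `μ → ∞`. -/
theorem gnc_surrogate_tendsto_tls (r c : ℝ) (hr : 0 ≤ r) (hc : 0 < c) :
    Filter.Tendsto
      (fun μ : ℝ =>
        sInf ((fun w : ℝ => w * r + μ * (1 - w) * c ^ 2 / (μ + w)) '' Set.Icc 0 1))
      Filter.atTop (nhds (min r (c ^ 2))) :=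
  gnc_surrogate_tendsto_tls_general r c
end

section
/- Gaussian chain-rule (posterior) density identity underlying the DDPM posterior: let x₀, x, x_t ∈ ℝ, let 0 < α < 1 and 0 < ā' < 1, and set ā = α·ā', β = 1 − α, β̃ = (1 − ā')·β/(1 − ā), and μ̃ = ( √(ā')·β·x₀ + √α·(1 − ā')·x_t ) / (1 − ā). Then the product of Gaussian densities satisfies: pdf_{N(√α·x, β)}(x_t) · pdf_{N(√(ā')·x₀, 1−ā')}(x) = pdf_{N(μ̃, β̃)}(x) · pdf_{N(√(ā)·x₀, 1−ā)}(x_t), where pdf_{N(μ,v)}(y) = (2πv)^{−1/2} exp(−(y−μ)²/(2v)) is the density of the real Gaussian with mean μ and variance v > 0. -/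
open ProbabilityTheory Real

/-- Gaussian chain-rule (posterior) density identity underlying the DDPM posterior:
with `ā = α·ā'`, `β = 1 − α`, `β̃ = (1 − ā')·β/(1 − ā)` and
`μ̃ = (√ā'·β·x₀ + √α·(1 − ā')·x_t)/(1 − ā)`, we have
`pdf_{N(√α·x, β)}(x_t) · pdf_{N(√ā'·x₀, 1−ā')}(x)
  = pdf_{N(μ̃, β̃)}(x) · pdf_{N(√ā·x₀, 1−ā)}(x_t)`. -/
theorem ddpm_posterior_density_identity (x₀ x xt α abar' : ℝ)
    (hα₀ : 0 < α) (hα₁ : α < 1) (h₀ : 0 < abar') (h₁ : abar' < 1) :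
    gaussianPDFReal (Real.sqrt α * x) (1 - α).toNNReal xt *
        gaussianPDFReal (Real.sqrt abar' * x₀) (1 - abar').toNNReal x =
      gaussianPDFReal
          ((Real.sqrt abar' * (1 - α) * x₀ + Real.sqrt α * (1 - abar') * xt) /
            (1 - α * abar'))
          ((1 - abar') * (1 - α) / (1 - α * abar')).toNNReal x *
        gaussianPDFReal (Real.sqrt (α * abar') * x₀) (1 - α * abar').toNNReal xt := by
  obtain ⟨s, hsnn, rfl⟩ : ∃ s, 0 ≤ s ∧ s ^ 2 = α :=
    ⟨Real.sqrt α, Real.sqrt_nonneg _, Real.sq_sqrt hα₀.le⟩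
  obtain ⟨t, htnn, rfl⟩ : ∃ t, 0 ≤ t ∧ t ^ 2 = abar' :=
    ⟨Real.sqrt abar', Real.sqrt_nonneg _, Real.sq_sqrt h₀.le⟩
  have hπ := Real.pi_pos
  have hv1 : (0:ℝ) < 1 - s ^ 2 := by linarith
  have hv2 : (0:ℝ) < 1 - t ^ 2 := by linarith
  have hv4 : (0:ℝ) < 1 - s ^ 2 * t ^ 2 := by nlinarith
  have hv3 : (0:ℝ) < (1 - t ^ 2) * (1 - s ^ 2) / (1 - s ^ 2 * t ^ 2) := by positivity
  have hst : Real.sqrt (s ^ 2 * t ^ 2) = s * t := by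
    rw [show s ^ 2 * t ^ 2 = (s * t) ^ 2 by ring, Real.sqrt_sq (by positivity)]
  simp only [gaussianPDFReal, Real.coe_toNNReal _ hv1.le, Real.coe_toNNReal _ hv2.le,
    Real.coe_toNNReal _ hv3.le, Real.coe_toNNReal _ hv4.le, hst,
    Real.sqrt_sq hsnn, Real.sqrt_sq htnn]
  have hC : (√(2 * π * (1 - s ^ 2)))⁻¹ * (√(2 * π * (1 - t ^ 2)))⁻¹ =
      (√(2 * π * ((1 - t ^ 2) * (1 - s ^ 2) / (1 - s ^ 2 * t ^ 2))))⁻¹ *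
        (√(2 * π * (1 - s ^ 2 * t ^ 2)))⁻¹ := by
    rw [← mul_inv, ← mul_inv, ← Real.sqrt_mul (by positivity), ← Real.sqrt_mul (by positivity)]
    congr 2
    field_simp
  have hE : Real.exp (-(xt - s * x) ^ 2 / (2 * (1 - s ^ 2))) *
      Real.exp (-(x - t * x₀) ^ 2 / (2 * (1 - t ^ 2))) =
      Real.exp (-(x - (t * (1 - s ^ 2) * x₀ + s * (1 - t ^ 2) * xt) / (1 - s ^ 2 * t ^ 2)) ^ 2 /
          (2 * ((1 - t ^ 2) * (1 - s ^ 2) / (1 - s ^ 2 * t ^ 2)))) *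
        Real.exp (-(xt - s * t * x₀) ^ 2 / (2 * (1 - s ^ 2 * t ^ 2))) := by
    rw [← Real.exp_add, ← Real.exp_add]
    congr 1
    field_simp
    ring
  calc (√(2 * π * (1 - s ^ 2)))⁻¹ * Real.exp (-(xt - s * x) ^ 2 / (2 * (1 - s ^ 2))) *
        ((√(2 * π * (1 - t ^ 2)))⁻¹ * Real.exp (-(x - t * x₀) ^ 2 / (2 * (1 - t ^ 2))))
      = ((√(2 * π * (1 - s ^ 2)))⁻¹ * (√(2 * π * (1 - t ^ 2)))⁻¹) *
        (Real.exp (-(xt - s * x) ^ 2 / (2 * (1 - s ^ 2))) *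
         Real.exp (-(x - t * x₀) ^ 2 / (2 * (1 - t ^ 2)))) := by ring
    _ = _ := by rw [hC, hE]; ring
end

section
/- Closed-form marginal of the DDPM forward process: let x₀ ∈ ℝ, let T be a positive natural number and β₁, …, β_T ∈ (0,1). On a probability space, let X₀ = x₀ almost surely, and for each t ∈ {1, …, T} let X_t = √(1−β_t)·X_{t−1} + √(β_t)·E_t, where E_t is a standard Gaussian random variable (law N(0,1)) independent of X_{t−1}. Then for every t ∈ {1, …, T}, the law of X_t is the real Gaussian measure with mean √(ā_t)·x₀ and variance 1 − ā_t, where ā_t = ∏_{s=1}^{t} (1 − β_s). -/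
open ProbabilityTheory MeasureTheory
open scoped NNReal

/-! If `X_{t-1} ~ N(√ā x₀, 1 - ā)`, then `√(1 - β) X_{t-1} ~ N(√(ā (1 - β)) x₀, (1 - β) (1 - ā))`
and `√β E_t ~ N(0, β)`; by independence the variances add up to `1 - ā (1 - β)`, which is the
claim at time `t`. Induction on `t`. -/

section GaussianStep

variable {Ω : Type*} {mΩ : MeasurableSpace Ω} {P : Measure Ω}

lemma ProbabilityTheory.hasLaw_of_map_eq {𝓧 : Type*} {m𝓧 : MeasurableSpace 𝓧} {X : Ω → 𝓧}
    {μ : Measure 𝓧} [NeZero μ] (h : P.map X = μ) : HasLaw X μ P :=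
  ⟨.of_map_ne_zero (h ▸ NeZero.ne μ), h⟩

lemma ProbabilityTheory.IndepFun.hasLaw_const_mul_add_const_mul_gaussianReal {X Y : Ω → ℝ}
    {m₁ m₂ : ℝ} {v₁ v₂ : ℝ≥0} (hXY : IndepFun X Y P)
    (hX : HasLaw X (gaussianReal m₁ v₁) P) (hY : HasLaw Y (gaussianReal m₂ v₂) P) (a b : ℝ) :
    HasLaw (fun ω ↦ a * X ω + b * Y ω)
      (gaussianReal (a * m₁ + b * m₂) (⟨a ^ 2, sq_nonneg a⟩ * v₁ + ⟨b ^ 2, sq_nonneg b⟩ * v₂))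
      P where
  aemeasurable := by fun_prop
  map_eq := gaussianReal_add_gaussianReal_of_indepFun
    (hXY.comp (measurable_const_mul a) (measurable_const_mul b))
    (gaussianReal_const_mul hX a).map_eq (gaussianReal_const_mul hY b).map_eq

lemma ProbabilityTheory.IndepFun.hasLaw_sqrt_one_sub_mul_add_sqrt_mul {X E : Ω → ℝ}
    {x A b : ℝ} (hXE : IndepFun X E P)
    (hX : HasLaw X (gaussianReal (√A * x) (1 - A).toNNReal) P)
    (hE : HasLaw E (gaussianReal 0 1) P) (hA : A ≤ 1) (hb₀ : 0 ≤ b) (hb₁ : b ≤ 1) :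
    HasLaw (fun ω ↦ √(1 - b) * X ω + √b * E ω)
      (gaussianReal (√(A * (1 - b)) * x) (1 - A * (1 - b)).toNNReal) P := by
  have hmean : √(1 - b) * (√A * x) + √b * 0 = √(A * (1 - b)) * x := by
    rw [Real.sqrt_mul' A (by linarith)]
    ring
  have hvar : (⟨√(1 - b) ^ 2, sq_nonneg _⟩ * (1 - A).toNNReal + ⟨√b ^ 2, sq_nonneg _⟩ * 1 : ℝ≥0)
      = (1 - A * (1 - b)).toNNReal := by
    have hAb : A * (1 - b) ≤ 1 := by nlinarith
    ext
    -- the `⟨_, _⟩` factors elaborate as subtype terms, which `NNReal.coe_mul` does not match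
    change √(1 - b) ^ 2 * ((1 - A).toNNReal : ℝ) + √b ^ 2 * 1 = ((1 - A * (1 - b)).toNNReal : ℝ)
    rw [Real.sq_sqrt hb₀, Real.sq_sqrt (sub_nonneg.mpr hb₁),
      Real.coe_toNNReal _ (sub_nonneg.mpr hA), Real.coe_toNNReal _ (sub_nonneg.mpr hAb)]
    ring
  simpa only [hmean, hvar] using hXE.hasLaw_const_mul_add_const_mul_gaussianReal hX hE √(1 - b) √b

end GaussianStep

theorem ddpm_forward_marginal_general {Ω : Type*} [MeasureSpace Ω]
    [IsProbabilityMeasure (ℙ : Measure Ω)]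
    (x₀ : ℝ) (T : ℕ) (β : ℕ → ℝ)
    (hβ : ∀ t, 1 ≤ t → t ≤ T → β t ∈ Set.Ioo (0 : ℝ) 1)
    (X E : ℕ → Ω → ℝ)
    (hX0 : ∀ᵐ ω ∂ℙ, X 0 ω = x₀)
    (hE : ∀ t, 1 ≤ t → t ≤ T → Measure.map (E t) ℙ = gaussianReal 0 1)
    (hindep : ∀ t, 1 ≤ t → t ≤ T → IndepFun (X (t - 1)) (E t) ℙ)
    (hrec : ∀ t, 1 ≤ t → t ≤ T → ∀ ω,
      X t ω = Real.sqrt (1 - β t) * X (t - 1) ω + Real.sqrt (β t) * E t ω) :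
    ∀ t, 1 ≤ t → t ≤ T →
      Measure.map (X t) ℙ =
        gaussianReal (Real.sqrt (∏ s ∈ Finset.Icc 1 t, (1 - β s)) * x₀)
          (1 - ∏ s ∈ Finset.Icc 1 t, (1 - β s)).toNNReal := by
  suffices h : ∀ t ≤ T, HasLaw (X t)
      (gaussianReal (√(∏ s ∈ Finset.Icc 1 t, (1 - β s)) * x₀)
        (1 - ∏ s ∈ Finset.Icc 1 t, (1 - β s)).toNNReal) ℙ from
    fun t _ ht ↦ (h t ht).map_eq
  intro t ht
  induction t with
  | zero => simpa [gaussianReal_zero_var] using hasLaw_dirac_of_ae_eq hX0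
  | succ n ih =>
    have hβn := hβ (n + 1) n.succ_pos ht
    have hβ_le_n : ∀ s ∈ Finset.Icc 1 n, β s ∈ Set.Ioo 0 1 := fun s hs ↦
      hβ s (Finset.mem_Icc.mp hs).1 ((Finset.mem_Icc.mp hs).2.trans (by omega))
    have hprod_le : ∏ s ∈ Finset.Icc 1 n, (1 - β s) ≤ 1 :=
      Finset.prod_le_one (fun s hs ↦ by linarith [(hβ_le_n s hs).2])
        (fun s hs ↦ by linarith [(hβ_le_n s hs).1])
    rw [Finset.prod_Icc_succ_top n.succ_pos, funext (hrec (n + 1) n.succ_pos ht)]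
    exact (hindep (n + 1) n.succ_pos ht).hasLaw_sqrt_one_sub_mul_add_sqrt_mul (ih (by omega))
      (hasLaw_of_map_eq (hE (n + 1) n.succ_pos ht)) hprod_le hβn.1.le hβn.2.le

/-- Closed-form marginal of the DDPM forward process: if `X 0 = x₀` a.s. and for each
`t ∈ {1, …, T}` we have `X t = √(1−β t)·X (t−1) + √(β t)·E t` with `E t` a standard
Gaussian independent of `X (t−1)`, then the law of `X t` is Gaussian with mean
`√(ā t)·x₀` and variance `1 − ā t`, where `ā t = ∏_{s=1}^{t} (1 − β s)`. -/
theorem ddpm_forward_marginal {Ω : Type*} [MeasureSpace Ω]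
    [IsProbabilityMeasure (ℙ : Measure Ω)]
    (x₀ : ℝ) (T : ℕ) (hT : 0 < T) (β : ℕ → ℝ)
    (hβ : ∀ t, 1 ≤ t → t ≤ T → β t ∈ Set.Ioo (0 : ℝ) 1)
    (X E : ℕ → Ω → ℝ)
    (hXmeas : ∀ t, Measurable (X t)) (hEmeas : ∀ t, Measurable (E t))
    (hX0 : ∀ᵐ ω ∂ℙ, X 0 ω = x₀)
    (hE : ∀ t, 1 ≤ t → t ≤ T → Measure.map (E t) ℙ = gaussianReal 0 1)
    (hindep : ∀ t, 1 ≤ t → t ≤ T → IndepFun (X (t - 1)) (E t) ℙ)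
    (hrec : ∀ t, 1 ≤ t → t ≤ T → ∀ ω,
      X t ω = Real.sqrt (1 - β t) * X (t - 1) ω + Real.sqrt (β t) * E t ω) :
    ∀ t, 1 ≤ t → t ≤ T →
      Measure.map (X t) ℙ =
        gaussianReal (Real.sqrt (∏ s ∈ Finset.Icc 1 t, (1 - β s)) * x₀)
          (1 - ∏ s ∈ Finset.Icc 1 t, (1 - β s)).toNNReal :=
  ddpm_forward_marginal_general x₀ T β hβ X E hX0 hE hindep hrec
end

section
/- Reduction of the denoising mean-matching error to noise-prediction error: let E be a real inner product space, let x₀, ε, ε̂ ∈ E, let 0 < α < 1 and 0 < ā' < 1, set ā = α·ā', β = 1 − α, and x_t = √(ā)·x₀ + √(1−ā)·ε. Define μ̃ = ( √(ā')·β·x₀ + √α·(1−ā')·x_t ) / (1 − ā) and μ̂ = (1/√α)·( x_t − (β/√(1−ā))·ε̂ ). Then ‖μ̃ − μ̂‖² = ( β² / ( α·(1−ā) ) ) · ‖ε − ε̂‖². -/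
/-! Substituting `x₀ = (x_t − √(1−ā)·ε)/√ā` into the posterior mean rewrites it as
`μ̃ = (1/√α)·(x_t − (β/√(1−ā))·ε)`, which has exactly the shape of the model mean `μ̂` with
`ε̂` in place of `ε`. Hence `μ̃ − μ̂ = (β/(√α·√(1−ā)))·(ε̂ − ε)`, and taking squared norms gives
the factor `β²/(α(1−ā))`. -/

namespace DDPM

variable {E : Type*}

section Module

variable [AddCommGroup E] [Module ℝ E]

noncomputable def noisedSample (abar : ℝ) (x₀ ε : E) : E :=
  √abar • x₀ + √(1 - abar) • ε

/-- The mean of `q(x_{t−1} | x_t, x₀)`, with `β = 1 − α` and `ā = α·ā'`. -/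
noncomputable def posteriorMean (α abar' : ℝ) (x₀ xt : E) : E :=
  (1 - α * abar')⁻¹ • ((√abar' * (1 - α)) • x₀ + (√α * (1 - abar')) • xt)

noncomputable def noiseMean (α abar : ℝ) (xt ε : E) : E :=
  (√α)⁻¹ • (xt - ((1 - α) / √(1 - abar)) • ε)

theorem posteriorMean_noisedSample {α abar' : ℝ} (hα : 0 < α) (habar : 0 < 1 - α * abar')
    (x₀ ε : E) :
    posteriorMean α abar' x₀ (noisedSample (α * abar') x₀ ε) =
      noiseMean α (α * abar') (noisedSample (α * abar') x₀ ε) ε := by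
  have hsqrt_α : √α ^ 2 = α := Real.sq_sqrt hα.le
  have hsqrt_one_sub : √(1 - α * abar') ^ 2 = 1 - α * abar' := Real.sq_sqrt habar.le
  have hsqrt_α_pos : 0 < √α := Real.sqrt_pos.2 hα
  have hsqrt_one_sub_pos : 0 < √(1 - α * abar') := Real.sqrt_pos.2 habar
  unfold posteriorMean noiseMean noisedSample
  rw [Real.sqrt_mul hα.le]
  match_scalars
  · field_simp
    rw [hsqrt_α]
    ring
  · field_simp
    rw [hsqrt_α, hsqrt_one_sub]
    ring

theorem noiseMean_sub_noiseMean (α abar : ℝ) (xt ε εhat : E) :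
    noiseMean α abar xt ε - noiseMean α abar xt εhat =
      ((√α)⁻¹ * ((1 - α) / √(1 - abar))) • (εhat - ε) := by
  unfold noiseMean
  rw [← smul_sub, mul_smul, smul_sub (_ / _), sub_sub_sub_cancel_left]

end Module

theorem norm_noiseMean_sub_noiseMean_sq [NormedAddCommGroup E] [InnerProductSpace ℝ E]
    {α abar : ℝ} (hα : 0 ≤ α) (habar : 0 ≤ 1 - abar) (xt ε εhat : E) :
    ‖noiseMean α abar xt ε - noiseMean α abar xt εhat‖ ^ 2 =
      (1 - α) ^ 2 / (α * (1 - abar)) * ‖ε - εhat‖ ^ 2 := by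
  rw [noiseMean_sub_noiseMean, norm_smul, mul_pow, norm_sub_rev, Real.norm_eq_abs, sq_abs,
    mul_pow, div_pow, inv_pow, Real.sq_sqrt hα, Real.sq_sqrt habar]
  simp only [div_eq_mul_inv, mul_inv]
  ring

end DDPM

open DDPM in
theorem ddpm_mean_matching_to_noise_prediction_general
    {E : Type*} [NormedAddCommGroup E] [InnerProductSpace ℝ E]
    (x₀ ε εhat : E) (α abar' abar β : ℝ) (xt μtilde μhat : E)
    (hα₀ : 0 < α) (hα₁ : α < 1) (h₁ : abar' < 1)
    (habar : abar = α * abar') (hβ : β = 1 - α)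
    (hxt : xt = Real.sqrt abar • x₀ + Real.sqrt (1 - abar) • ε)
    (hμtilde : μtilde =
      (1 - abar)⁻¹ • ((Real.sqrt abar' * β) • x₀ + (Real.sqrt α * (1 - abar')) • xt))
    (hμhat : μhat = (Real.sqrt α)⁻¹ • (xt - (β / Real.sqrt (1 - abar)) • εhat)) :
    ‖μtilde - μhat‖ ^ 2 = (β ^ 2 / (α * (1 - abar))) * ‖ε - εhat‖ ^ 2 := by
  subst habar hβ
  have hpos : 0 < 1 - α * abar' := by nlinarith [mul_pos hα₀ (sub_pos.2 h₁)]
  have hxt' : xt = noisedSample (α * abar') x₀ ε := hxt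
  have hμtilde' : μtilde = noiseMean α (α * abar') xt ε := by
    rw [hμtilde, hxt']
    exact posteriorMean_noisedSample hα₀ hpos x₀ ε
  have hμhat' : μhat = noiseMean α (α * abar') xt εhat := hμhat
  rw [hμtilde', hμhat', norm_noiseMean_sub_noiseMean_sq hα₀.le hpos.le]

/-- Reduction of the denoising mean-matching error to the noise-prediction error:
with `ā = α·ā'`, `β = 1 − α`, `x_t = √ā·x₀ + √(1−ā)·ε`, true posterior mean
`μ̃ = (√ā'·β·x₀ + √α·(1−ā')·x_t)/(1−ā)` and model mean
`μ̂ = (1/√α)·(x_t − (β/√(1−ā))·ε̂)`, we have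
`‖μ̃ − μ̂‖² = (β²/(α(1−ā)))·‖ε − ε̂‖²`. -/
theorem ddpm_mean_matching_to_noise_prediction
    {E : Type*} [NormedAddCommGroup E] [InnerProductSpace ℝ E]
    (x₀ ε εhat : E) (α abar' abar β : ℝ) (xt μtilde μhat : E)
    (hα₀ : 0 < α) (hα₁ : α < 1) (h₀ : 0 < abar') (h₁ : abar' < 1)
    (habar : abar = α * abar') (hβ : β = 1 - α)
    (hxt : xt = Real.sqrt abar • x₀ + Real.sqrt (1 - abar) • ε)
    (hμtilde : μtilde =
      (1 - abar)⁻¹ • ((Real.sqrt abar' * β) • x₀ + (Real.sqrt α * (1 - abar')) • xt))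
    (hμhat : μhat = (Real.sqrt α)⁻¹ • (xt - (β / Real.sqrt (1 - abar)) • εhat)) :
    ‖μtilde - μhat‖ ^ 2 = (β ^ 2 / (α * (1 - abar))) * ‖ε - εhat‖ ^ 2 :=
  ddpm_mean_matching_to_noise_prediction_general x₀ ε εhat α abar' abar β xt μtilde μhat hα₀ hα₁ h₁
    habar hβ hxt hμtilde hμhat
end
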